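/- Suppose n ≥ 1 and n·p < k ≤ n, where ε < p < 1. Then the minimum, over all feasible priors μ, of the posterior confidence P(μ,p) equals θ·f(p_l) / (θ·f(p_l) + (1−θ)·f(k/n)), and it is attained by the two-point prior μ = θ·δ_{p_l} + (1−θ)·δ_{k/n}. -/

import Mathlib

open MeasureTheory Set

/-- The Bernoulli likelihood of observing `k` failures in `n` trials. -/
noncomputable def likelihood (k n : ℕ) (x : ℝ) : ℝ := x ^ k * (1 - x) ^ (n - k)

/-- A prior (probability measure on `[0,1]`) is feasible if it assigns mass `θ`
to `[0, ε]` and full mass to `[p_l, 1]`. -/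
def Feasible (pl ε θ : ℝ) (μ : Measure ℝ) : Prop :=
  IsProbabilityMeasure μ ∧ μ (Icc 0 ε) = ENNReal.ofReal θ ∧ μ (Icc pl 1) = 1

/-- The posterior confidence `P(μ, p)` in the bound `p` after observing
`k` failures in `n` miles, with prior `μ`. -/
noncomputable def posterior (k n : ℕ) (μ : Measure ℝ) (p : ℝ) : ℝ :=
  (∫ x in Icc (0 : ℝ) p, likelihood k n x ∂μ) /
    (∫ x in Icc (0 : ℝ) 1, likelihood k n x ∂μ)

/-- The two-point prior placing mass `θ` at `x1` and mass `1 - θ` at `x3`. -/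
noncomputable def twoPoint (θ x1 x3 : ℝ) : Measure ℝ :=
  ENNReal.ofReal θ • Measure.dirac x1 + ENNReal.ofReal (1 - θ) • Measure.dirac x3

/-!
The likelihood `f` is unimodal on `[0,1]` with mode `k/n`, since `x (1 - x) f' = (k - n x) f`.
For a feasible prior, the numerator `∫_{[0,p]} f` is at least `θ f(p_l)`: the mass `θ` of `[0,ε]`
sits on `[p_l, ε]`, where `f ≥ f(p_l)` because `ε < k/n`. The remaining part
`∫_{(p,1]} f` of the denominator is at most `(1 - θ) f(k/n)`, since `(p,1]` misses `[0,ε]`.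
As `a / (a + b)` increases in `a` and decreases in `b`, the posterior is at least
`θ f(p_l) / (θ f(p_l) + (1 - θ) f(k/n))`, which is the posterior of the two-point prior.
-/

lemma div_add_le_div_add {a a' b b' : ℝ} (ha : 0 < a) (haa' : a ≤ a') (hb' : 0 ≤ b')
    (hb'b : b' ≤ b) : a / (a + b) ≤ a' / (a' + b') := by
  rw [div_le_div_iff₀ (by linarith) (by linarith)]
  nlinarith

section Likelihood

variable {k n : ℕ}

lemma continuous_likelihood (k n : ℕ) : Continuous (likelihood k n) := by
  unfold likelihood
  fun_prop

lemma likelihood_nonneg {x : ℝ} (hx : x ∈ Icc 0 1) : 0 ≤ likelihood k n x :=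
  mul_nonneg (pow_nonneg hx.1 _) (pow_nonneg (sub_nonneg.2 hx.2) _)

lemma likelihood_pos {x : ℝ} (hx : x ∈ Ioo 0 1) : 0 < likelihood k n x :=
  mul_pos (pow_pos hx.1 _) (pow_pos (sub_pos.2 hx.2) _)

lemma hasDerivAt_likelihood (k n : ℕ) (x : ℝ) :
    HasDerivAt (likelihood k n)
      (k * x ^ (k - 1) * (1 - x) ^ (n - k) +
        x ^ k * ((n - k : ℕ) * (1 - x) ^ (n - k - 1) * (-1))) x :=
  (hasDerivAt_pow k x).mul (((hasDerivAt_id x).const_sub 1).pow (n - k))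

lemma mul_deriv_likelihood (hkn : k ≤ n) (x : ℝ) :
    x * (1 - x) * deriv (likelihood k n) x = (k - n * x) * likelihood k n x := by
  have pow_pred_mul (y : ℝ) (m : ℕ) : (m : ℝ) * (y * y ^ (m - 1)) = m * y ^ m := by
    rcases m with _ | m
    · simp
    · rw [Nat.add_sub_cancel, pow_succ']
  rw [(hasDerivAt_likelihood k n x).deriv, likelihood]
  linear_combination (1 - x) ^ (n - k) * (1 - x) * pow_pred_mul x k -
    x ^ k * x * pow_pred_mul (1 - x) (n - k) - x ^ k * (1 - x) ^ (n - k) * x * (by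
      push_cast [Nat.cast_sub hkn]; ring : ((n - k : ℕ) : ℝ) - (n - k) = 0)

lemma natCast_div_mem_Icc (hkn : k ≤ n) : (k / n : ℝ) ∈ Icc 0 1 :=
  ⟨by positivity, div_le_one_of_le₀ (Nat.cast_le.2 hkn) n.cast_nonneg⟩

lemma monotoneOn_likelihood (hn : 0 < n) (hkn : k ≤ n) :
    MonotoneOn (likelihood k n) (Icc 0 (k / n)) := by
  refine monotoneOn_of_deriv_nonneg (convex_Icc _ _) (continuous_likelihood k n).continuousOn
    (fun x _ => (hasDerivAt_likelihood k n x).differentiableAt.differentiableWithinAt) ?_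
  rw [interior_Icc]
  rintro x ⟨hx0, hxc⟩
  have hn' : (0 : ℝ) < n := Nat.cast_pos.2 hn
  have hnx : n * x < k := by rwa [lt_div_iff₀ hn', mul_comm] at hxc
  have hx1 : x < 1 := hxc.trans_le (natCast_div_mem_Icc hkn).2
  have hxx : 0 < x * (1 - x) := mul_pos hx0 (sub_pos.2 hx1)
  refine nonneg_of_mul_nonneg_right ?_ hxx
  rw [mul_deriv_likelihood hkn]
  exact mul_nonneg (sub_nonneg.2 hnx.le) (likelihood_pos ⟨hx0, hx1⟩).le

lemma antitoneOn_likelihood (hn : 0 < n) (hkn : k ≤ n) :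
    AntitoneOn (likelihood k n) (Icc (k / n) 1) := by
  refine antitoneOn_of_deriv_nonpos (convex_Icc _ _) (continuous_likelihood k n).continuousOn
    (fun x _ => (hasDerivAt_likelihood k n x).differentiableAt.differentiableWithinAt) ?_
  rw [interior_Icc]
  rintro x ⟨hcx, hx1⟩
  have hn' : (0 : ℝ) < n := Nat.cast_pos.2 hn
  have hnx : k < n * x := by rwa [div_lt_iff₀ hn', mul_comm] at hcx
  have hx0 : 0 < x := (natCast_div_mem_Icc hkn).1.trans_lt hcx
  have hxx : 0 < x * (1 - x) := mul_pos hx0 (sub_pos.2 hx1)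
  refine nonpos_of_mul_nonpos_right ?_ hxx
  rw [mul_deriv_likelihood hkn]
  exact mul_nonpos_of_nonpos_of_nonneg (sub_nonpos.2 hnx.le) (likelihood_pos ⟨hx0, hx1⟩).le

lemma likelihood_le_likelihood_div (hn : 0 < n) (hkn : k ≤ n) {x : ℝ} (hx : x ∈ Icc 0 1) :
    likelihood k n x ≤ likelihood k n (k / n) := by
  obtain ⟨hc0, hc1⟩ := natCast_div_mem_Icc hkn
  rcases le_total x (k / n) with h | h
  · exact monotoneOn_likelihood hn hkn ⟨hx.1, h⟩ ⟨hc0, le_rfl⟩ h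
  · exact antitoneOn_likelihood hn hkn ⟨le_rfl, hc1⟩ ⟨h, hx.2⟩ h

end Likelihood

namespace Feasible

variable {pl ε θ : ℝ} {μ : Measure ℝ}

lemma ae_mem_Icc (h : Feasible pl ε θ μ) : ∀ᵐ x ∂μ, x ∈ Icc pl 1 :=
  have := h.1
  mem_ae_iff.2 ((prob_compl_eq_zero_iff measurableSet_Icc).2 h.2.2)

lemma measureReal_Icc (h : Feasible pl ε θ μ) (hθ : 0 ≤ θ) : μ.real (Icc 0 ε) = θ := by
  rw [measureReal_def, h.2.1, ENNReal.toReal_ofReal hθ]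

lemma mul_le_setIntegral (h : Feasible pl ε θ μ) (hθ : 0 ≤ θ) {g : ℝ → ℝ} {c : ℝ}
    (hg : IntegrableOn g (Icc 0 ε) μ) (hcg : ∀ x ∈ Icc pl ε, c ≤ g x) :
    θ * c ≤ ∫ x in Icc 0 ε, g x ∂μ := by
  have := h.1
  calc θ * c = ∫ _ in Icc 0 ε, c ∂μ := by rw [setIntegral_const, h.measureReal_Icc hθ, smul_eq_mul]
    _ ≤ ∫ x in Icc 0 ε, g x ∂μ := by
      refine setIntegral_mono_on_ae (integrable_const c) hg measurableSet_Icc ?_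
      filter_upwards [h.ae_mem_Icc] with x hx hx'
      exact hcg x ⟨hx.1, hx'.2⟩

lemma setIntegral_Ioc_le (h : Feasible pl ε θ μ) (hθ : 0 ≤ θ) {p : ℝ} (hεp : ε ≤ p)
    {g : ℝ → ℝ} {c : ℝ} (hc : 0 ≤ c) (hg : IntegrableOn g (Ioc p 1) μ)
    (hgc : ∀ x ∈ Ioc p 1, g x ≤ c) :
    ∫ x in Ioc p 1, g x ∂μ ≤ (1 - θ) * c := by
  have := h.1
  have hsub : Ioc p 1 ⊆ (Icc 0 ε)ᶜ := fun x hx hx' => (hx'.2.trans hεp).not_gt hx.1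
  calc ∫ x in Ioc p 1, g x ∂μ ≤ ∫ _ in Ioc p 1, c ∂μ :=
        setIntegral_mono_on hg (integrable_const c) measurableSet_Ioc hgc
    _ = μ.real (Ioc p 1) * c := by rw [setIntegral_const, smul_eq_mul]
    _ ≤ μ.real (Icc 0 ε)ᶜ * c := mul_le_mul_of_nonneg_right (measureReal_mono hsub) hc
    _ = (1 - θ) * c := by rw [probReal_compl_eq_one_sub measurableSet_Icc, h.measureReal_Icc hθ]

end Feasible

lemma le_posterior_of_feasible {k n : ℕ} (hn : 0 < n) (hkn : k ≤ n) {pl ε θ p : ℝ}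
    (hpl : 0 < pl) (hple : pl < ε) (hθ0 : 0 < θ) (hk : n * p < k)
    (hεp : ε < p) (hp1 : p < 1) {μ : Measure ℝ} (hμ : Feasible pl ε θ μ) :
    θ * likelihood k n pl / (θ * likelihood k n pl + (1 - θ) * likelihood k n (k / n)) ≤
      posterior k n μ p := by
  have := hμ.1
  have hp0 : 0 ≤ p := by linarith
  have hpc : p < k / n := by rwa [lt_div_iff₀ (Nat.cast_pos.2 hn), mul_comm]
  have hint : IntegrableOn (likelihood k n) (Icc 0 1) μ :=
    (continuous_likelihood k n).integrableOn_Icc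
  have hnum : θ * likelihood k n pl ≤ ∫ x in Icc 0 p, likelihood k n x ∂μ := calc
    _ ≤ ∫ x in Icc 0 ε, likelihood k n x ∂μ :=
      hμ.mul_le_setIntegral hθ0.le (hint.mono_set (Icc_subset_Icc_right (by linarith)))
        fun x hx => monotoneOn_likelihood hn hkn ⟨hpl.le, by linarith⟩
          ⟨hpl.le.trans hx.1, by linarith [hx.2]⟩ hx.1
    _ ≤ ∫ x in Icc 0 p, likelihood k n x ∂μ :=
      setIntegral_mono_set (hint.mono_set (Icc_subset_Icc_right hp1.le))
        ((ae_restrict_mem measurableSet_Icc).mono fun x hx =>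
          likelihood_nonneg ⟨hx.1, hx.2.trans hp1.le⟩)
        (Icc_subset_Icc_right hεp.le).eventuallyLE
  have hIoc : Ioc p 1 ⊆ Icc 0 1 := Ioc_subset_Icc_self.trans (Icc_subset_Icc_left hp0)
  have hrest_nonneg : 0 ≤ ∫ x in Ioc p 1, likelihood k n x ∂μ :=
    setIntegral_nonneg measurableSet_Ioc fun x hx => likelihood_nonneg (hIoc hx)
  have hrest_le : ∫ x in Ioc p 1, likelihood k n x ∂μ ≤ (1 - θ) * likelihood k n (k / n) :=
    hμ.setIntegral_Ioc_le hθ0.le hεp.le (likelihood_nonneg (natCast_div_mem_Icc hkn))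
      (hint.mono_set hIoc) fun x hx => likelihood_le_likelihood_div hn hkn (hIoc hx)
  rw [posterior, ← Icc_union_Ioc_eq_Icc hp0 hp1.le,
    setIntegral_union ((Iic_disjoint_Ioc le_rfl).mono_left Icc_subset_Iic_self) measurableSet_Ioc
      (hint.mono_set (Icc_subset_Icc_right hp1.le)) (hint.mono_set hIoc)]
  exact div_add_le_div_add (mul_pos hθ0 (likelihood_pos ⟨hpl, by linarith⟩)) hnum
    hrest_nonneg hrest_le

lemma twoPoint_apply (θ x1 x3 : ℝ) {s : Set ℝ} (hs : MeasurableSet s)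
    [Decidable (x1 ∈ s)] [Decidable (x3 ∈ s)] :
    twoPoint θ x1 x3 s =
      (if x1 ∈ s then ENNReal.ofReal θ else 0) +
        (if x3 ∈ s then ENNReal.ofReal (1 - θ) else 0) := by
  rw [twoPoint, Measure.add_apply, Measure.smul_apply, Measure.smul_apply,
    Measure.dirac_apply' _ hs, Measure.dirac_apply' _ hs]
  split_ifs <;> simp [*]

lemma setIntegral_twoPoint {θ : ℝ} (hθ0 : 0 ≤ θ) (hθ1 : θ ≤ 1) (x1 x3 : ℝ) (g : ℝ → ℝ)
    (s : Set ℝ) [Decidable (x1 ∈ s)] [Decidable (x3 ∈ s)] :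
    ∫ x in s, g x ∂(twoPoint θ x1 x3) =
      (if x1 ∈ s then θ * g x1 else 0) + (if x3 ∈ s then (1 - θ) * g x3 else 0) := by
  have hint (r a : ℝ) : Integrable g ((ENNReal.ofReal r • Measure.dirac a).restrict s) :=
    (((integrable_const (g a)).congr (ae_eq_dirac g).symm).smul_measure
      ENNReal.ofReal_ne_top).restrict
  rw [twoPoint, Measure.restrict_add, integral_add_measure (hint _ _) (hint _ _),
    Measure.restrict_smul, Measure.restrict_smul, integral_smul_measure, integral_smul_measure,
    setIntegral_dirac, setIntegral_dirac, ENNReal.toReal_ofReal hθ0,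
    ENNReal.toReal_ofReal (sub_nonneg.2 hθ1)]
  split_ifs <;> simp

lemma feasible_twoPoint {pl ε θ x3 : ℝ} (hθ0 : 0 ≤ θ) (hθ1 : θ ≤ 1) (hpl : 0 ≤ pl)
    (hple : pl ≤ ε) (hεx3 : ε < x3) (hx3 : x3 ≤ 1) : Feasible pl ε θ (twoPoint θ pl x3) := by
  classical
  have hmass : ENNReal.ofReal θ + ENNReal.ofReal (1 - θ) = 1 := by
    rw [← ENNReal.ofReal_add hθ0 (sub_nonneg.2 hθ1), add_sub_cancel, ENNReal.ofReal_one]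
  refine ⟨⟨?_⟩, ?_, ?_⟩
  · simp [twoPoint_apply θ pl x3 MeasurableSet.univ, hmass]
  · rw [twoPoint_apply θ pl x3 measurableSet_Icc, if_pos ⟨hpl, hple⟩,
      if_neg fun h => h.2.not_gt hεx3, add_zero]
  · rw [twoPoint_apply θ pl x3 measurableSet_Icc, if_pos ⟨le_rfl, by linarith⟩,
      if_pos ⟨by linarith, hx3⟩, hmass]

lemma posterior_twoPoint (k n : ℕ) {pl θ p x3 : ℝ} (hθ0 : 0 ≤ θ) (hθ1 : θ ≤ 1)
    (hpl : pl ∈ Icc 0 p) (hpx3 : p < x3) (hx3 : x3 ≤ 1) :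
    posterior k n (twoPoint θ pl x3) p =
      θ * likelihood k n pl / (θ * likelihood k n pl + (1 - θ) * likelihood k n x3) := by
  classical
  rw [posterior, setIntegral_twoPoint hθ0 hθ1, setIntegral_twoPoint hθ0 hθ1, if_pos hpl,
    if_neg fun h => h.2.not_gt hpx3, if_pos ⟨hpl.1, by linarith [hpl.2]⟩,
    if_pos ⟨by linarith [hpl.1, hpl.2], hx3⟩, add_zero]

theorem stmt_6_general (k n : ℕ) (hkn : k ≤ n) (pl ε θ p : ℝ)
    (hpl : 0 < pl) (hple : pl < ε)
    (hθ0 : 0 < θ) (hθ1 : θ ≤ 1)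
    (hk1 : (n : ℝ) * p < k) (hεp : ε < p) (hp1 : p < 1) :
    IsLeast {y : ℝ | ∃ μ : Measure ℝ, Feasible pl ε θ μ ∧ posterior k n μ p = y}
        (θ * likelihood k n pl /
          (θ * likelihood k n pl + (1 - θ) * likelihood k n ((k : ℝ) / n))) ∧
      Feasible pl ε θ (twoPoint θ pl ((k : ℝ) / n)) ∧
      posterior k n (twoPoint θ pl ((k : ℝ) / n)) p =
        θ * likelihood k n pl /
          (θ * likelihood k n pl + (1 - θ) * likelihood k n ((k : ℝ) / n)) := by
  have hn : 0 < n := by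
    refine Nat.pos_of_ne_zero fun hn => ?_
    subst hn
    obtain rfl : k = 0 := Nat.le_zero.1 hkn
    simp at hk1
  have hpc : p < k / n := by rwa [lt_div_iff₀ (Nat.cast_pos.2 hn), mul_comm]
  have hc1 : (k / n : ℝ) ≤ 1 := (natCast_div_mem_Icc hkn).2
  have hfeas := feasible_twoPoint hθ0.le hθ1 hpl.le hple.le (hεp.trans hpc) hc1
  have hpost := posterior_twoPoint k n hθ0.le hθ1 ⟨hpl.le, by linarith⟩ hpc hc1
  exact ⟨⟨⟨_, hfeas, hpost⟩, fun _ ⟨_, hμ, hy⟩ =>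
    hy ▸ le_posterior_of_feasible hn hkn hpl hple hθ0 hk1 hεp hp1 hμ⟩, hfeas, hpost⟩

theorem stmt_6 (k n : ℕ) (hkn : k ≤ n) (hn : 1 ≤ n) (pl ε θ p : ℝ)
    (hpl : 0 < pl) (hple : pl < ε) (hε1 : ε < 1)
    (hθ0 : 0 < θ) (hθ1 : θ ≤ 1)
    (hk1 : (n : ℝ) * p < k) (hεp : ε < p) (hp1 : p < 1) :
    IsLeast {y : ℝ | ∃ μ : Measure ℝ, Feasible pl ε θ μ ∧ posterior k n μ p = y}
        (θ * likelihood k n pl /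
          (θ * likelihood k n pl + (1 - θ) * likelihood k n ((k : ℝ) / n))) ∧
      Feasible pl ε θ (twoPoint θ pl ((k : ℝ) / n)) ∧
      posterior k n (twoPoint θ pl ((k : ℝ) / n)) p =
        θ * likelihood k n pl /
          (θ * likelihood k n pl + (1 - θ) * likelihood k n ((k : ℝ) / n)) :=
  stmt_6_general k n hkn pl ε θ p hpl hple hθ0 hθ1 hk1 hεp hp1
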